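/- Let G be a graph with ℓ isolated vertices and t ≥ 1. If t·ℓ > dist(G), then dist(μ_t(G)) = t·ℓ. -/

import Mathlib

open SimpleGraph

/-- The generalized Mycielskian `μ_t(G)`: levels `0,…,t` of copies of `V(G)`
plus a root `none`. Level-0 vertices are the original vertices. -/
def genMyc {V : Type*} (G : SimpleGraph V) (t : ℕ) :
    SimpleGraph (Option (Fin (t + 1) × V)) :=
  SimpleGraph.fromRel fun a b =>
    match a, b with
    | some (s, i), some (s', j) =>
        ((s : ℕ) = 0 ∧ (s' : ℕ) = 0 ∧ G.Adj i j) ∨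
        ((s' : ℕ) = (s : ℕ) + 1 ∧ G.Adj i j)
    | some (s, _), none => (s : ℕ) = t
    | _, _ => False

/-- The (traditional) Mycielskian `μ(G)`. -/
def myc {V : Type*} (G : SimpleGraph V) : SimpleGraph (Option (Fin 2 × V)) :=
  genMyc G 1

/-- The star `K_{1,m}` with center `0` and `m` leaves. -/
def starG (m : ℕ) : SimpleGraph (Fin (m + 1)) :=
  SimpleGraph.fromRel fun a _ => a = 0

/-- A `d`-coloring is distinguishing if only the trivial automorphism preserves it. -/
def IsDistinguishing {V : Type*} (H : SimpleGraph V) (d : ℕ) (c : V → Fin d) : Prop :=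
  ∀ φ : H ≃g H, (∀ v, c (φ v) = c v) → ∀ v, φ v = v

/-- The distinguishing number of a graph. -/
noncomputable def distNum {V : Type*} (H : SimpleGraph V) : ℕ :=
  sInf {d | ∃ c : V → Fin d, IsDistinguishing H d c}

/-!
Automorphisms of `μ_t(G)` permute its isolated vertices, the copies on levels `< t` of the `ℓ`
isolated vertices of `G`, arbitrarily; so these `t * ℓ` vertices need pairwise distinct colours.
Conversely, give them all `t * ℓ` colours, give the root `w` the colour `t * ℓ - 1`, which is not
used by a distinguishing colouring `c` of `G` since `dist(G) < t * ℓ`, and give every other copy of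
`v` the colour `c v`. An automorphism preserving this colouring fixes the isolated vertices and
`w`, so it preserves the distance `t + 1 - s` to `w` of a non-isolated vertex on level `s`, hence
preserves levels. On each level it induces a colour-preserving automorphism of `G`, which is
trivial: on level `0` because that level is a copy of `G`, on level `s + 1` because adjacency
between level `s`, already fixed pointwise, and level `s + 1` is again a copy of `G`.
-/

namespace SimpleGraph

variable {W W' : Type*} {H : SimpleGraph W} {H' : SimpleGraph W'}

def isolatedSet (H : SimpleGraph W) : Set W := {v | ∀ u, ¬ H.Adj v u}

lemma Iso.apply_mem_isolatedSet_iff (φ : H ≃g H') {v : W} :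
    φ v ∈ H'.isolatedSet ↔ v ∈ H.isolatedSet := by
  simp only [isolatedSet, Set.mem_ofPred_eq, φ.surjective.forall, φ.map_adj_iff]

def Iso.swapOfMemIsolatedSet [DecidableEq W] {a b : W} (ha : a ∈ H.isolatedSet)
    (hb : b ∈ H.isolatedSet) : H ≃g H where
  toEquiv := Equiv.swap a b
  map_rel_iff' := by
    have key : ∀ x y, H.Adj x y → H.Adj (Equiv.swap a b x) (Equiv.swap a b y) := by
      intro x y hxy
      have hx : x ≠ a ∧ x ≠ b := ⟨fun h => ha y (h ▸ hxy), fun h => hb y (h ▸ hxy)⟩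
      have hy : y ≠ a ∧ y ≠ b := ⟨fun h => ha x (h ▸ hxy.symm), fun h => hb x (h ▸ hxy.symm)⟩
      rwa [Equiv.swap_apply_of_ne_of_ne hx.1 hx.2, Equiv.swap_apply_of_ne_of_ne hy.1 hy.2]
    exact fun {x y} => ⟨fun h => by simpa using key _ _ h, key x y⟩

lemma Hom.dist_map_le (f : H →g H') {u v : W} (h : H.Reachable u v) :
    H'.dist (f u) (f v) ≤ H.dist u v := by
  obtain ⟨p, hp⟩ := h.exists_walk_length_eq_dist
  simpa [hp] using dist_le (p.map f)

lemma Iso.dist_map (φ : H ≃g H') (u v : W) : H'.dist (φ u) (φ v) = H.dist u v := by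
  by_cases h : H.Reachable u v
  · refine le_antisymm (Hom.dist_map_le φ.toHom h) ?_
    simpa using Hom.dist_map_le φ.symm.toHom (Iso.reachable_iff.2 h : H'.Reachable (φ u) (φ v))
  · rw [dist_eq_zero_of_not_reachable h, dist_eq_zero_of_not_reachable (mt Iso.reachable_iff.1 h)]

lemma Walk.apply_le_add_length {f : W → ℕ} (hf : ∀ x y, H.Adj x y → f y ≤ f x + 1) {u v : W}
    (p : H.Walk u v) : f v ≤ f u + p.length := by
  induction p with
  | nil => simp
  | cons hxy _ ih =>
    have := hf _ _ hxy
    rw [Walk.length_cons]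
    omega

lemma Reachable.apply_le_add_dist {f : W → ℕ} (hf : ∀ x y, H.Adj x y → f y ≤ f x + 1)
    {u v : W} (h : H.Reachable u v) : f v ≤ f u + H.dist u v := by
  obtain ⟨p, hp⟩ := h.exists_walk_length_eq_dist
  exact hp ▸ p.apply_le_add_length hf

end SimpleGraph

section Distinguishing

variable {W : Type*} {H : SimpleGraph W} {d : ℕ} {c : W → Fin d}

lemma IsDistinguishing.injOn_isolatedSet (hc : IsDistinguishing H d c) :
    Set.InjOn c H.isolatedSet := by
  classical
  intro a ha b hb hab
  have hswap : ∀ v, c (Equiv.swap a b v) = c v := by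
    intro v
    rw [Equiv.swap_apply_def]
    split_ifs <;> simp_all
  simpa [Iso.swapOfMemIsolatedSet, eq_comm] using hc (Iso.swapOfMemIsolatedSet ha hb) hswap a

lemma IsDistinguishing.apply_eq_self [Finite W] (hc : IsDistinguishing H d c) {g : W → W}
    (hg : g.Injective) (hadj : ∀ i j, H.Adj (g i) (g j) ↔ H.Adj i j) (hcg : ∀ i, c (g i) = c i)
    (i : W) : g i = i :=
  hc ⟨Equiv.ofBijective g (Finite.injective_iff_bijective.1 hg), hadj _ _⟩ hcg i

lemma exists_isDistinguishing_distNum [Finite W] (H : SimpleGraph W) :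
    ∃ c : W → Fin (distNum H), IsDistinguishing H (distNum H) c :=
  Nat.sInf_mem (s := {d | ∃ c : W → Fin d, IsDistinguishing H d c})
    ⟨_, Finite.equivFin W, fun _ hφ v => (Finite.equivFin W).injective (hφ v)⟩

lemma ncard_isolatedSet_le_distNum [Finite W] (H : SimpleGraph W) :
    H.isolatedSet.ncard ≤ distNum H := by
  obtain ⟨c, hc⟩ := exists_isDistinguishing_distNum H
  simpa using Set.ncard_le_ncard_of_injOn c (fun _ _ => Set.mem_univ _) hc.injOn_isolatedSet

end Distinguishing

section genMyc

variable {V : Type*} {G : SimpleGraph V} {t : ℕ}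

lemma genMyc_adj_some_some {s s' : Fin (t + 1)} {i j : V} :
    (genMyc G t).Adj (some (s, i)) (some (s', j)) ↔
      (((s : ℕ) = 0 ∧ (s' : ℕ) = 0) ∨ (s' : ℕ) = s + 1 ∨ (s : ℕ) = s' + 1) ∧ G.Adj i j := by
  simp only [genMyc, fromRel_adj, ne_eq, Option.some.injEq, Prod.mk.injEq]
  constructor
  · rintro ⟨-, (⟨h₁, h₂, h⟩ | ⟨h₁, h⟩) | (⟨h₁, h₂, h⟩ | ⟨h₁, h⟩)⟩ <;> simp_all [h.symm]
  · rintro ⟨(⟨h₁, h₂⟩ | h₁ | h₁), h⟩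
    · exact ⟨fun e => h.ne e.2, .inl (.inl ⟨h₁, h₂, h⟩)⟩
    · exact ⟨fun e => h.ne e.2, .inl (.inr ⟨h₁, h⟩)⟩
    · exact ⟨fun e => h.ne e.2, .inr (.inr ⟨h₁, h.symm⟩)⟩

lemma genMyc_adj_some_none {s : Fin (t + 1)} {i : V} :
    (genMyc G t).Adj (some (s, i)) none ↔ (s : ℕ) = t := by
  simp [genMyc]

lemma genMyc_adj_zero_zero {i j : V} :
    (genMyc G t).Adj (some (0, i)) (some (0, j)) ↔ G.Adj i j := by
  simp [genMyc_adj_some_some]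

lemma genMyc_adj_castSucc_succ {s : Fin t} {i j : V} :
    (genMyc G t).Adj (some (s.castSucc, i)) (some (s.succ, j)) ↔ G.Adj i j := by
  simp [genMyc_adj_some_some]

lemma some_mem_isolatedSet_genMyc {s : Fin (t + 1)} {i : V} :
    some (s, i) ∈ (genMyc G t).isolatedSet ↔ (s : ℕ) < t ∧ i ∈ G.isolatedSet := by
  simp only [isolatedSet, Set.mem_ofPred_eq]
  constructor
  · intro h
    have hs : (s : ℕ) < t :=
      lt_of_le_of_ne (Nat.lt_succ_iff.1 s.isLt) fun e => h none (genMyc_adj_some_none.2 e)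
    exact ⟨hs, fun u hu =>
      h (some (⟨s + 1, by omega⟩, u)) (genMyc_adj_some_some.2 ⟨.inr (.inl rfl), hu⟩)⟩
  · rintro ⟨hs, hi⟩ (_ | ⟨s', j⟩) hadj
    · exact hs.ne (genMyc_adj_some_none.1 hadj)
    · exact hi j (genMyc_adj_some_some.1 hadj).2

lemma none_notMem_isolatedSet_genMyc [Nonempty V] : none ∉ (genMyc G t).isolatedSet :=
  fun h => h (some (Fin.last t, Classical.arbitrary V)) (genMyc_adj_some_none.2 rfl).symm

lemma ncard_isolatedSet_genMyc [Nonempty V] :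
    (genMyc G t).isolatedSet.ncard = t * G.isolatedSet.ncard := by
  have hrange : (genMyc G t).isolatedSet =
      Set.range fun p : Fin t × G.isolatedSet => some (p.1.castSucc, (p.2 : V)) := by
    ext (_ | ⟨s, i⟩)
    · simp [none_notMem_isolatedSet_genMyc]
    · simp only [some_mem_isolatedSet_genMyc, Set.mem_range]
      exact ⟨fun ⟨hs, hi⟩ => ⟨⟨⟨s, hs⟩, ⟨i, hi⟩⟩, rfl⟩,
        by rintro ⟨⟨a, j, hj⟩, h⟩; cases h; exact ⟨a.isLt, hj⟩⟩
  rw [hrange, Set.ncard_range_of_injective, Nat.card_prod, Nat.card_coe_set_eq, Nat.card_fin]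
  rintro ⟨a, i⟩ ⟨b, j⟩ h
  simp_all [Fin.castSucc_inj, Subtype.ext_iff]

def genMycLevel : Option (Fin (t + 1) × V) → ℕ
  | none => t + 1
  | some (s, _) => s

lemma genMycLevel_le_of_adj {x y : Option (Fin (t + 1) × V)} (h : (genMyc G t).Adj x y) :
    genMycLevel y ≤ genMycLevel x + 1 := by
  rcases x with _ | ⟨s, i⟩ <;> rcases y with _ | ⟨s', j⟩
  · exact absurd h (genMyc G t).irrefl
  · simp only [genMycLevel]; omega
  · simp [genMycLevel, genMyc_adj_some_none.1 h]
  · have := (genMyc_adj_some_some.1 h).1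
    simp only [genMycLevel]; omega

lemma genMyc_exists_walk_none_of_adj {i j : V} (h : G.Adj i j) (s : Fin (t + 1)) :
    ∃ p : (genMyc G t).Walk (some (s, i)) none, p.length = t + 1 - s := by
  induction s using Fin.reverseInduction generalizing i j with
  | last => exact ⟨.cons (genMyc_adj_some_none.2 rfl) .nil, by simp⟩
  | cast s ih =>
    obtain ⟨p, hp⟩ := ih h.symm
    exact ⟨.cons (genMyc_adj_castSucc_succ.2 h) p, by simp [hp]; omega⟩

lemma genMyc_dist_none {s : Fin (t + 1)} {i : V} (h : some (s, i) ∉ (genMyc G t).isolatedSet) :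
    (genMyc G t).dist (some (s, i)) none = t + 1 - s := by
  obtain ⟨p, hp⟩ : ∃ p : (genMyc G t).Walk (some (s, i)) none, p.length = t + 1 - s := by
    rw [some_mem_isolatedSet_genMyc] at h
    by_cases hs : (s : ℕ) = t
    · exact ⟨.cons (genMyc_adj_some_none.2 hs) .nil, by simp [hs]⟩
    · obtain ⟨j, hj⟩ : ∃ j, G.Adj i j := by
        by_contra hi
        push Not at hi
        exact h ⟨lt_of_le_of_ne (Nat.lt_succ_iff.1 s.isLt) hs, hi⟩
      exact genMyc_exists_walk_none_of_adj hj s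
  refine le_antisymm (hp ▸ dist_le p) ?_
  have := Reachable.apply_le_add_dist (fun _ _ => genMycLevel_le_of_adj) ⟨p⟩
  simp only [genMycLevel] at this
  omega

lemma genMyc_iso_exists_apply_some_eq (φ : genMyc G t ≃g genMyc G t) (hnone : φ none = none)
    (hiso : ∀ x ∈ (genMyc G t).isolatedSet, φ x = x) (s : Fin (t + 1)) (i : V) :
    ∃ j, φ (some (s, i)) = some (s, j) := by
  by_cases hx : some (s, i) ∈ (genMyc G t).isolatedSet
  · exact ⟨i, hiso _ hx⟩
  rcases hφx : φ (some (s, i)) with _ | ⟨s', j⟩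
  · exact absurd (φ.injective (hφx.trans hnone.symm)) (Option.some_ne_none _)
  have hy : some (s', j) ∉ (genMyc G t).isolatedSet := hφx ▸ mt φ.apply_mem_isolatedSet_iff.1 hx
  have hdist := φ.dist_map (some (s, i)) none
  rw [hφx, hnone, genMyc_dist_none hx, genMyc_dist_none hy] at hdist
  have hs : s' = s := Fin.ext (by have := s.isLt; have := s'.isLt; omega)
  exact ⟨j, hs ▸ rfl⟩

lemma genMyc_eq_id_of_levelwise_rigid (φ : genMyc G t ≃g genMyc G t) {g : Fin (t + 1) → V → V}
    (hg : ∀ s i, φ (some (s, i)) = some (s, g s i))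
    (hrigid : ∀ s, (∀ i j, G.Adj (g s i) (g s j) ↔ G.Adj i j) → g s = id) (s : Fin (t + 1)) :
    g s = id := by
  induction s using Fin.induction with
  | zero =>
    refine hrigid 0 fun i j => ?_
    rw [← genMyc_adj_zero_zero, ← hg, ← hg, φ.map_adj_iff, genMyc_adj_zero_zero]
  | succ s ih =>
    have hmix : ∀ i j, G.Adj i (g s.succ j) ↔ G.Adj i j := fun i j => by
      have := φ.map_adj_iff (v := some (s.castSucc, i)) (w := some (s.succ, j))
      simpa only [hg, ih, id, genMyc_adj_castSucc_succ] using this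
    refine hrigid s.succ fun i j => ?_
    rw [hmix, adj_comm, hmix, adj_comm]

theorem isDistinguishing_genMyc [Finite V] {dG d : ℕ} {c : V → Fin dG}
    (hc : IsDistinguishing G dG c) {c' : Option (Fin (t + 1) × V) → Fin d}
    (hiso : Set.InjOn c' (genMyc G t).isolatedSet)
    (hnone : ∀ x ∉ (genMyc G t).isolatedSet, c' x = c' none → x = none)
    (hlevel : ∀ s i j, some (s, i) ∉ (genMyc G t).isolatedSet →
      some (s, j) ∉ (genMyc G t).isolatedSet → c' (some (s, i)) = c' (some (s, j)) → c i = c j) :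
    IsDistinguishing (genMyc G t) d c' := by
  intro φ hφ
  have fix_iso : ∀ x ∈ (genMyc G t).isolatedSet, φ x = x := fun x hx =>
    hiso (φ.apply_mem_isolatedSet_iff.2 hx) hx (hφ x)
  have fix_none : φ none = none := by
    by_cases h : none ∈ (genMyc G t).isolatedSet
    · exact fix_iso none h
    · exact hnone _ (mt φ.apply_mem_isolatedSet_iff.1 h) (hφ none)
  choose g hg using genMyc_iso_exists_apply_some_eq φ fix_none fix_iso
  have hg_inj : ∀ s, (g s).Injective := fun s i j h => by
    have : φ (some (s, i)) = φ (some (s, j)) := by rw [hg, hg, h]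
    simpa using φ.injective this
  have hg_col : ∀ s i, c (g s i) = c i := fun s i => by
    by_cases hx : some (s, i) ∈ (genMyc G t).isolatedSet
    · have := (hg s i).symm.trans (fix_iso _ hx)
      simp_all
    · refine hlevel s _ _ ?_ hx ((hg s i) ▸ hφ _)
      exact hg s i ▸ mt φ.apply_mem_isolatedSet_iff.1 hx
  have hg_id := genMyc_eq_id_of_levelwise_rigid φ hg fun s hadj =>
    funext (hc.apply_eq_self (hg_inj s) hadj (hg_col s))
  rintro (_ | ⟨s, i⟩)
  · exact fix_none
  · rw [hg, hg_id]; rfl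

lemma distNum_genMyc_le [Finite V] [Nonempty V] (h : distNum G < t * G.isolatedSet.ncard) :
    distNum (genMyc G t) ≤ t * G.isolatedSet.ncard := by
  classical
  obtain ⟨c, hc⟩ := exists_isDistinguishing_distNum G
  set n := t * G.isolatedSet.ncard
  let e : (genMyc G t).isolatedSet ≃ Fin n :=
    Finite.equivFinOfCardEq (by rw [Nat.card_coe_set_eq, ncard_isolatedSet_genMyc])
  let c' : Option (Fin (t + 1) × V) → Fin n := fun x =>
    if hx : x ∈ (genMyc G t).isolatedSet then e ⟨x, hx⟩
    else x.elim ⟨n - 1, by omega⟩ fun p => ⟨c p.2, by omega⟩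
  refine Nat.sInf_le ⟨c', isDistinguishing_genMyc hc ?_ ?_ ?_⟩
  · intro x hx y hy hxy
    simpa [c', hx, hy] using hxy
  · rintro (_ | ⟨s, i⟩) hx hxn
    · rfl
    · have := (c i).isLt
      simp [c', hx, none_notMem_isolatedSet_genMyc, Fin.ext_iff] at hxn
      omega
  · intro s i j hi hj hij
    simpa [c', hi, hj, Fin.ext_iff] using hij

end genMyc

theorem stmt_14_general {V : Type*} [Fintype V] (G : SimpleGraph V)
    (t : ℕ)
    (ℓ : ℕ) (hℓ : ℓ = {v : V | ∀ u : V, ¬ G.Adj v u}.ncard)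
    (h : distNum G < t * ℓ) :
    distNum (genMyc G t) = t * ℓ := by
  change ℓ = G.isolatedSet.ncard at hℓ
  subst hℓ
  obtain ⟨v, -⟩ := Set.nonempty_of_ncard_ne_zero (s := G.isolatedSet) fun h0 => by simp [h0] at h
  have : Nonempty V := ⟨v⟩
  refine le_antisymm (distNum_genMyc_le h) ?_
  rw [← ncard_isolatedSet_genMyc]
  exact ncard_isolatedSet_le_distNum _

theorem stmt_14 {V : Type*} [Fintype V] (G : SimpleGraph V)
    (t : ℕ) (ht : 1 ≤ t)
    (ℓ : ℕ) (hℓ : ℓ = {v : V | ∀ u : V, ¬ G.Adj v u}.ncard)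
    (h : distNum G < t * ℓ) :
    distNum (genMyc G t) = t * ℓ :=
  stmt_14_general G t ℓ hℓ h
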